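/- Let A = 1 and B = 1, and let (x_n)_{n ≥ −9} satisfy x_{n+1} = x_{n−9}/(1 + x_{n−1}·x_{n−3}·x_{n−5}·x_{n−7}·x_{n−9}) with nonzero terms and denominators. Set a_j = x_{−j} for j = 0,...,9, M_j = 5 − ⌊j/2⌋, and P_j = ∏_{k=0}^{4} a_{(j mod 2) + 2k}. Then x_{10n−j} = a_j · ∏_{s=0}^{n−1} (1 + (5s + M_j − 1)·P_j)/(1 + (5s + M_j)·P_j) for all n ≥ 0 and j ∈ {0,...,9}. -/

import Mathlib

/-!
With `z m := x m · x (m-2) · x (m-4) · x (m-6) · x (m-8)` the recurrence reads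
`x (N + 10) = x N / (1 + z (N + 8))`, and multiplying it by the four other factors gives
`z (m + 2) = z m / (1 + z m)`. This Möbius map iterates to `z (m + 2t) = z m / (1 + t z m)`,
so each step of ten multiplies `x N` by `(1 + t Q) / (1 + (t + 1) Q)` with `Q = z (-(j mod 2)) = P j`
and `t = 5 n + M j - 1`.
-/

theorem div_one_add_self_iterate {K : Type*} [Field K] {z : ℕ → K}
    (hz : ∀ t, z (t + 1) = z t / (1 + z t)) (hne : ∀ t, 1 + z t ≠ 0) (t : ℕ) :
    1 + t * z 0 ≠ 0 ∧ z t = z 0 / (1 + t * z 0) := by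
  induction t with
  | zero => simp
  | succ t ih =>
    obtain ⟨hden, hzt⟩ := ih
    have hstep : 1 + z t = (1 + (t + 1) * z 0) / (1 + t * z 0) := by
      rw [hzt, one_add_div hden]; ring
    have hden' : 1 + (t + 1) * z 0 ≠ 0 := by
      intro h
      exact hne t (by rw [hstep, h, zero_div])
    push_cast
    refine ⟨hden', ?_⟩
    rw [hz, hstep, hzt, div_div_div_cancel_right₀ hden]

noncomputable def windowProd (x : ℤ → ℝ) (m : ℤ) : ℝ :=
  x m * x (m - 2) * x (m - 4) * x (m - 6) * x (m - 8)

lemma windowProd_sub_one (x : ℤ → ℝ) (n : ℤ) :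
    windowProd x (n - 1) = x (n - 1) * x (n - 3) * x (n - 5) * x (n - 7) * x (n - 9) := by
  simp only [windowProd, sub_sub]
  norm_num

section Recurrence

variable {x : ℤ → ℝ}

lemma one_add_windowProd_ne_zero
    (hden : ∀ n : ℤ, 0 ≤ n →
      1 + x (n - 1) * x (n - 3) * x (n - 5) * x (n - 7) * x (n - 9) ≠ 0)
    {m : ℤ} (hm : -1 ≤ m) : 1 + windowProd x m ≠ 0 := by
  have h := hden (m + 1) (by omega)
  rwa [← windowProd_sub_one, add_sub_cancel_right] at h

variable (hrec : ∀ n : ℤ, 0 ≤ n →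
  x (n + 1) = x (n - 9) / (1 + x (n - 1) * x (n - 3) * x (n - 5) * x (n - 7) * x (n - 9)))
include hrec

lemma add_ten_eq_div {N : ℤ} (hN : -9 ≤ N) :
    x (N + 10) = x N / (1 + windowProd x (N + 8)) := by
  have h := hrec (N + 9) (by omega)
  rw [← windowProd_sub_one] at h
  norm_num [add_assoc, add_sub_assoc] at h
  exact h

lemma windowProd_add_two {m : ℤ} (hm : -1 ≤ m) :
    windowProd x (m + 2) = windowProd x m / (1 + windowProd x m) := by
  have h := add_ten_eq_div hrec (N := m - 8) (by omega)
  simp only [sub_add_cancel, show m - 8 + 10 = m + 2 by ring] at h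
  simp only [windowProd, add_sub_cancel_right, h, show m + 2 - 4 = m - 2 by ring,
    show m + 2 - 6 = m - 4 by ring, show m + 2 - 8 = m - 6 by ring]
  ring

lemma add_ten_eq_mul (hden : ∀ n : ℤ, 0 ≤ n →
      1 + x (n - 1) * x (n - 3) * x (n - 5) * x (n - 7) * x (n - 9) ≠ 0)
    {m N : ℤ} (t : ℕ) (hm : -1 ≤ m) (hN : N + 8 = m + 2 * t) :
    x (N + 10) = x N * ((1 + t * windowProd x m) / (1 + (t + 1) * windowProd x m)) := by
  obtain ⟨hden', hwt⟩ := div_one_add_self_iterate (z := fun s : ℕ ↦ windowProd x (m + 2 * s))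
    (fun s ↦ by
      push_cast
      rw [mul_add, mul_one, ← add_assoc, windowProd_add_two hrec (by omega)])
    (fun s ↦ one_add_windowProd_ne_zero hden (by omega)) t
  simp only [Nat.cast_zero, mul_zero, add_zero] at hden' hwt
  rw [add_ten_eq_div hrec (by omega), hN, hwt, one_add_div hden', div_div_eq_mul_div,
    mul_div_assoc]
  ring_nf

end Recurrence

theorem stmt17_general (x : ℤ → ℝ)
    (hden : ∀ n : ℤ, 0 ≤ n →
      1 + x (n-1) * x (n-3) * x (n-5) * x (n-7) * x (n-9) ≠ 0)
    (hrec : ∀ n : ℤ, 0 ≤ n →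
      x (n + 1) = x (n - 9) / (1 + x (n-1) * x (n-3) * x (n-5) * x (n-7) * x (n-9)))
    (a : ℕ → ℝ) (ha : ∀ j : ℕ, a j = x (-(j : ℤ)))
    (M : ℕ → ℕ) (hM : ∀ j, M j = 5 - j / 2)
    (P : ℕ → ℝ)
    (hP : ∀ j, P j = a (j % 2) * a (j % 2 + 2) * a (j % 2 + 4) * a (j % 2 + 6) * a (j % 2 + 8)) :
    ∀ n : ℕ, ∀ j : ℕ, j ≤ 9 →
      x (10 * (n : ℤ) - (j : ℤ)) = a j * ∏ s ∈ Finset.range n,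
        (1 + (((5 * s + M j : ℕ) : ℝ) - 1) * P j) /
        (1 + ((5 * s + M j : ℕ) : ℝ) * P j) := by
  intro n j hj
  have hPj : P j = windowProd x (-(j % 2 : ℕ)) := by
    rw [hP]
    simp only [ha, windowProd]
    push_cast
    ring_nf
  induction n with
  | zero => simp [ha]
  | succ n ih =>
    have ht : 5 * n + M j = (5 * n + 4 - j / 2) + 1 := by rw [hM]; omega
    rw [Finset.prod_range_succ, ← mul_assoc, ← ih, ht, hPj]
    push_cast
    rw [add_sub_cancel_right, show 10 * ((n : ℤ) + 1) - j = (10 * n - j) + 10 by ring]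
    exact add_ten_eq_mul hrec hden (5 * n + 4 - j / 2) (by omega) (by omega)

theorem stmt17 (x : ℤ → ℝ)
    (hx : ∀ n : ℤ, -9 ≤ n → x n ≠ 0)
    (hden : ∀ n : ℤ, 0 ≤ n →
      1 + x (n-1) * x (n-3) * x (n-5) * x (n-7) * x (n-9) ≠ 0)
    (hrec : ∀ n : ℤ, 0 ≤ n →
      x (n + 1) = x (n - 9) / (1 + x (n-1) * x (n-3) * x (n-5) * x (n-7) * x (n-9)))
    (a : ℕ → ℝ) (ha : ∀ j : ℕ, a j = x (-(j : ℤ)))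
    (M : ℕ → ℕ) (hM : ∀ j, M j = 5 - j / 2)
    (P : ℕ → ℝ)
    (hP : ∀ j, P j = a (j % 2) * a (j % 2 + 2) * a (j % 2 + 4) * a (j % 2 + 6) * a (j % 2 + 8)) :
    ∀ n : ℕ, ∀ j : ℕ, j ≤ 9 →
      x (10 * (n : ℤ) - (j : ℤ)) = a j * ∏ s ∈ Finset.range n,
        (1 + (((5 * s + M j : ℕ) : ℝ) - 1) * P j) /
        (1 + ((5 * s + M j : ℕ) : ℝ) * P j) :=
  stmt17_general x hden hrec a ha M hM P hP
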